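/- Uniqueness of supertransvectant coefficients: let N be a positive integer, s ∈ {1,−1}, and λ, μ real numbers such that 2λ + l ≠ 0 and 2μ + m ≠ 0 for all integers l, m with 0 ≤ l, m ≤ N. Suppose C : {(i,j) ∈ ℕ² : i+j = N} → ℝ satisfies, for all nonnegative integers l, m for which the indices involved lie in this set: (2λ+l)·C_{2l+1,2m} = −s·(2μ+m)·C_{2l,2m+1}; l·C_{2l,2m−1} = s·m·C_{2l−1,2m}; (2λ+l)·C_{2l+1,2m−1} = −s·m·C_{2l,2m}; l·C_{2l,2m} = s·(2μ+m)·C_{2l−1,2m+1}. If C_{0,N} = 0, then C vanishes identically. Consequently, any two solutions of this system with the same value at (0,N) coincide, so the solution space is at most one-dimensional. -/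

import Mathlib

/-- The linear system expressing osp(1|2)-equivariance of a bilinear differential operator
`Σ_{i+j=N} C_{i,j} D̄^i(f)·D̄^j(g) : F_λ ⊗ F_μ → F_{λ+μ+N/2}`; the coefficients `C` are
indexed by pairs `(i,j)` of nonnegative integers with `i+j = N`, and the equations are
imposed whenever all indices involved are legal (nonnegative and summing to `N`). -/
def TransvectantSystem (N : ℕ) (s lam mu : ℝ) (C : ℕ → ℕ → ℝ) : Prop :=
  (∀ l m : ℕ, (2 * l + 1) + 2 * m = N →
    (2 * lam + (l : ℝ)) * C (2 * l + 1) (2 * m)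
      = -s * (2 * mu + (m : ℝ)) * C (2 * l) (2 * m + 1)) ∧
  (∀ l m : ℕ, 1 ≤ l → 1 ≤ m → 2 * l + (2 * m - 1) = N →
    (l : ℝ) * C (2 * l) (2 * m - 1) = s * (m : ℝ) * C (2 * l - 1) (2 * m)) ∧
  (∀ l m : ℕ, 1 ≤ m → (2 * l + 1) + (2 * m - 1) = N →
    (2 * lam + (l : ℝ)) * C (2 * l + 1) (2 * m - 1) = -s * (m : ℝ) * C (2 * l) (2 * m)) ∧
  (∀ l m : ℕ, 1 ≤ l → 2 * l + 2 * m = N →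
    (l : ℝ) * C (2 * l) (2 * m) = s * (2 * mu + (m : ℝ)) * C (2 * l - 1) (2 * m + 1))

/-!
Each equation of the system expresses `C (i+1, j)`, times a coefficient that does not vanish
(`l + 1`, or `2λ + l` outside the resonant set), through `C (i, j+1)`; which of the four
equations applies depends on the parities of `i + 1` and `j`. Walking along the antidiagonal
`i + j = N` from `(0, N)`, a solution is therefore determined by its value at `(0, N)`, and the
zero function is a solution.
-/

namespace TransvectantSystem

variable {N : ℕ} {s lam mu : ℝ} {C D : ℕ → ℕ → ℝ}

theorem zero : TransvectantSystem N s lam mu 0 := by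
  refine ⟨?_, ?_, ?_, ?_⟩ <;> intros <;> simp

theorem apply_succ_eq_of_apply_eq (hC : TransvectantSystem N s lam mu C)
    (hD : TransvectantSystem N s lam mu D) (hlam : ∀ l : ℕ, l ≤ N → 2 * lam + (l : ℝ) ≠ 0)
    {i j : ℕ} (hij : i + 1 + j = N) (h : C i (j + 1) = D i (j + 1)) :
    C (i + 1) j = D (i + 1) j := by
  obtain ⟨c1, c2, c3, c4⟩ := hC
  obtain ⟨d1, d2, d3, d4⟩ := hD
  rcases Nat.even_or_odd' i with ⟨l, rfl | rfl⟩ <;>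
    rcases Nat.even_or_odd' j with ⟨m, rfl | rfl⟩
  · refine mul_left_cancel₀ (hlam l (by omega)) ?_
    rw [c1 l m (by omega), d1 l m (by omega), h]
  · have c := c3 l (m + 1) (by omega) (by omega)
    have d := d3 l (m + 1) (by omega) (by omega)
    simp only [show 2 * (m + 1) = 2 * m + 1 + 1 by ring, Nat.add_sub_cancel] at c d
    refine mul_left_cancel₀ (hlam l (by omega)) ?_
    rw [c, d, h]
  · have c := c4 (l + 1) m (by omega) (by omega)
    have d := d4 (l + 1) m (by omega) (by omega)
    simp only [show 2 * (l + 1) = 2 * l + 1 + 1 by ring, Nat.add_sub_cancel] at c d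
    refine mul_left_cancel₀ (Nat.cast_ne_zero.mpr l.succ_ne_zero) ?_
    rw [c, d, h]
  · have c := c2 (l + 1) (m + 1) (by omega) (by omega) (by omega)
    have d := d2 (l + 1) (m + 1) (by omega) (by omega) (by omega)
    simp only [show 2 * (l + 1) = 2 * l + 1 + 1 by ring,
      show 2 * (m + 1) = 2 * m + 1 + 1 by ring, Nat.add_sub_cancel] at c d
    refine mul_left_cancel₀ (Nat.cast_ne_zero.mpr l.succ_ne_zero) ?_
    rw [c, d, h]

theorem eq_of_apply_zero_eq (hC : TransvectantSystem N s lam mu C)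
    (hD : TransvectantSystem N s lam mu D) (hlam : ∀ l : ℕ, l ≤ N → 2 * lam + (l : ℝ) ≠ 0)
    (h0 : C 0 N = D 0 N) : ∀ i j : ℕ, i + j = N → C i j = D i j := by
  intro i
  induction i with
  | zero => rintro j rfl; simpa using h0
  | succ i ih => exact fun j hij ↦ hC.apply_succ_eq_of_apply_eq hD hlam hij (ih (j + 1) (by omega))

end TransvectantSystem

theorem transvectant_coefficients_unique_general (N : ℕ) (s lam mu : ℝ)
    (hlam : ∀ l : ℕ, l ≤ N → 2 * lam + (l : ℝ) ≠ 0)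
    (C D : ℕ → ℕ → ℝ)
    (hC : TransvectantSystem N s lam mu C) (hD : TransvectantSystem N s lam mu D) :
    (C 0 N = 0 → ∀ i j : ℕ, i + j = N → C i j = 0) ∧
    (C 0 N = D 0 N → ∀ i j : ℕ, i + j = N → C i j = D i j) :=
  ⟨hC.eq_of_apply_zero_eq TransvectantSystem.zero hlam, hC.eq_of_apply_zero_eq hD hlam⟩

/-- uniqueness of supertransvectant coefficients.  If `λ`, `μ` avoid the
resonant set (`2λ+l ≠ 0`, `2μ+m ≠ 0` for `0 ≤ l,m ≤ N`) then a solution of the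
equivariance system vanishing at `(0,N)` vanishes identically; consequently two solutions
agreeing at `(0,N)` coincide, so the solution space is at most one-dimensional. -/
theorem transvectant_coefficients_unique (N : ℕ) (hN : 1 ≤ N) (s lam mu : ℝ)
    (hs : s = 1 ∨ s = -1)
    (hlam : ∀ l : ℕ, l ≤ N → 2 * lam + (l : ℝ) ≠ 0)
    (hmu : ∀ m : ℕ, m ≤ N → 2 * mu + (m : ℝ) ≠ 0)
    (C D : ℕ → ℕ → ℝ)
    (hC : TransvectantSystem N s lam mu C) (hD : TransvectantSystem N s lam mu D) :
    (C 0 N = 0 → ∀ i j : ℕ, i + j = N → C i j = 0) ∧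
    (C 0 N = D 0 N → ∀ i j : ℕ, i + j = N → C i j = D i j) :=
  transvectant_coefficients_unique_general N s lam mu hlam C D hC hD
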